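/- For every real ζ with 0 ≤ ζ < 0.046, the second derivative at ζ of the function ζ ↦ ln h(0.454, ζ, ξ₁(ζ)) is less than −2.46; in particular, this function is strictly concave on [0, 0.046). -/

import Mathlib

/-- The function `f(χ,ζ)` (real exponentiation, with the convention `0^0 = 1`). -/
noncomputable def ffun (χ ζ : ℝ) : ℝ :=
  ((3 : ℝ) ^ (1 / 2 - 4 * χ + 2 * ζ)
      * (1 - 2 * χ - 2 * ζ) ^ (1 - 2 * χ - 2 * ζ)
      * (1 - 2 * χ + 4 * ζ) ^ (1 - 2 * χ + 4 * ζ)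
      * (6 * χ - 3 / 2 + 3 * ζ) ^ (6 * χ - 3 / 2 + 3 * ζ)
      * (6 * χ - 3 / 2 - 9 * ζ) ^ (6 * χ - 3 / 2 - 9 * ζ)) /
    ((2 * χ + ζ - 1 / 2) ^ (2 * χ + ζ - 1 / 2)
      * (2 : ℝ) ^ (1 - 2 * χ + ζ)
      * (1 / 2 - χ - ζ) ^ (1 / 2 - χ - ζ)
      * (1 / 2 - χ + 2 * ζ) ^ (1 / 2 - χ + 2 * ζ)
      * (2 * χ - 3 * ζ - 1 / 2) ^ (2 * χ - 3 * ζ - 1 / 2))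

/-- The function `g(χ,ζ,ξ)` (real exponentiation, with the convention `0^0 = 1`). -/
noncomputable def gfun (χ ζ ξ : ℝ) : ℝ :=
  ((2 : ℝ) ^ (2 * ξ) * (1 / 1.618) ^ ξ) /
    (ξ ^ ξ
      * (1 - 2 * χ - 2 * ζ - ξ) ^ (1 - 2 * χ - 2 * ζ - ξ)
      * (1 - 2 * χ + 4 * ζ - ξ) ^ (1 - 2 * χ + 4 * ζ - ξ)
      * (10 * χ - 7 / 2 - 5 * ζ + ξ) ^ (10 * χ - 7 / 2 - 5 * ζ + ξ))

/-- The function `h(χ,ζ,ξ) = f(χ,ζ) · g(χ,ζ,ξ)`. -/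
noncomputable def hfun (χ ζ ξ : ℝ) : ℝ := ffun χ ζ * gfun χ ζ ξ

/-- The domain `Ω`. -/
def Omega : Set (ℝ × ℝ × ℝ) :=
  {p | 0.454 < p.1 ∧ p.1 ≤ 0.45537 ∧ 0 ≤ p.2.1 ∧ p.2.1 ≤ 1 / 2 - p.1 ∧
    0 ≤ p.2.2 ∧ p.2.2 ≤ 1 - 2 * p.1 - 2 * p.2.1}

/-- The coefficient `b(ζ)` (with `χ = 0.454`). -/
noncomputable def bcoef (ζ : ℝ) : ℝ := -0.18 * 0.454 + 0.09 * ζ - 2.337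

/-- The coefficient `c(ζ)` (with `χ = 0.454`). -/
noncomputable def ccoef (ζ : ℝ) : ℝ :=
  16 * 0.454 ^ 2 - 32 * ζ ^ 2 - 16 * 0.454 + 8 * ζ - 16 * 0.454 * ζ + 4

/-- The discriminant `Δ(ζ) = b(ζ)² − 4ac(ζ)` with `a = 2.382`. -/
noncomputable def Δcoef (ζ : ℝ) : ℝ := (bcoef ζ) ^ 2 - 4 * 2.382 * (ccoef ζ)

/-- The root `ξ₁(ζ) = (−b(ζ) − √Δ(ζ)) / (2a)` with `a = 2.382`. -/
noncomputable def xi1 (ζ : ℝ) : ℝ := (-(bcoef ζ) - Real.sqrt (Δcoef ζ)) / (2 * 2.382)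

/-!
After taking logarithms, `h(0.454, ζ, ξ)` is a signed sum of terms `t log t` over affine
functions `t` of `(ζ, ξ)`. The equation `∂ξ log h = 0` reads `4uv = 1.618 ξ w`
(with `u, v, w` the last three bases of `g`), which is exactly the quadratic
`a ξ² + b(ζ) ξ + c(ζ) = 0`; hence `ξ₁(ζ)` is a critical point of `ξ ↦ log h(0.454, ζ, ξ)`, and
by the envelope principle the first derivative of `ζ ↦ log h(0.454, ζ, ξ₁(ζ))` is the partial
derivative `∂ζ log h`, a sum of logarithms. Differentiating once more gives a rational function
of `ζ`, `ξ₁` and `ξ₁'`. Bounding `ξ₁'` through `2.3413 ≤ √Δ ≤ 2.4146` on three subintervals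
of `[0, 0.046)` and each remaining term by its value at an endpoint yields the estimate;
strict concavity follows.
-/

open Real Filter Topology

noncomputable def smallerRoot (a b c : ℝ) : ℝ := (-b - √(discrim a b c)) / (2 * a)

section SmallerRoot

variable {a b c : ℝ}

theorem quadratic_smallerRoot_eq_zero (ha : 0 < a) (hΔ : 0 ≤ discrim a b c) :
    a * (smallerRoot a b c * smallerRoot a b c) + b * smallerRoot a b c + c = 0 :=
  (quadratic_eq_zero_iff ha.ne' (mul_self_sqrt hΔ).symm _).2 (Or.inr rfl)

theorem smallerRoot_lt (ha : 0 < a) {t : ℝ} (ht : a * (t * t) + b * t + c < 0) :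
    smallerRoot a b c < t := by
  have hlt : (2 * a * t + b) ^ 2 < discrim a b c := by unfold discrim; nlinarith
  have habs : |2 * a * t + b| < √(discrim a b c) := (lt_sqrt (abs_nonneg _)).2 (by rwa [sq_abs])
  rw [smallerRoot, div_lt_iff₀ (by positivity)]
  linarith [(abs_lt.1 habs).1]

theorem smallerRoot_pos (ha : 0 < a) (hb : b < 0) (hc : 0 < c) : 0 < smallerRoot a b c := by
  have : √(discrim a b c) < -b := by
    rw [sqrt_lt' (by linarith)]; unfold discrim; nlinarith
  apply div_pos <;> linarith

end SmallerRoot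

theorem ccoef_eq (z : ℝ) : ccoef z = 32 * (0.046 - z) * (z + 0.023) := by
  unfold ccoef; ring

theorem Δcoef_eq (z : ℝ) : Δcoef z = 304.9041 * z ^ 2 - 7.4479776 * z + 5.5276264704 := by
  unfold Δcoef bcoef ccoef; ring

theorem Δcoef_pos (z : ℝ) : 0 < Δcoef z := by
  rw [Δcoef_eq]; nlinarith [sq_nonneg (z - 0.0122)]

theorem le_sqrt_Δcoef (z : ℝ) : 2.3413 ≤ √(Δcoef z) := by
  rw [le_sqrt' (by norm_num), Δcoef_eq]; nlinarith [sq_nonneg (z - 0.0122)]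

theorem sqrt_Δcoef_le {z : ℝ} (hz₀ : 0 ≤ z) (hz₁ : z ≤ 0.046) : √(Δcoef z) ≤ 2.4146 := by
  rw [sqrt_le_left (by norm_num), Δcoef_eq]; nlinarith

theorem xi1_eq_smallerRoot (z : ℝ) : xi1 z = smallerRoot 2.382 (bcoef z) (ccoef z) := rfl

theorem quadratic_xi1_eq_zero (z : ℝ) :
    2.382 * (xi1 z * xi1 z) + bcoef z * xi1 z + ccoef z = 0 :=
  quadratic_smallerRoot_eq_zero (by norm_num) (Δcoef_pos z).le

theorem quadratic_eq_four_mul_sub (z ξ : ℝ) :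
    2.382 * (ξ * ξ) + bcoef z * ξ + ccoef z
      = 4 * (1 - 2 * 0.454 - 2 * z - ξ) * (1 - 2 * 0.454 + 4 * z - ξ)
        - 1.618 * ξ * (10 * 0.454 - 7 / 2 - 5 * z + ξ) := by
  unfold bcoef ccoef; ring

/-- `Admissible z ξ` says that all bases of the real powers in `h(0.454, z, ξ)` are positive. -/
def Admissible (z ξ : ℝ) : Prop :=
  -0.023 < z ∧ z < 0.046 ∧ 0 < ξ ∧ ξ < 1 - 2 * 0.454 - 2 * z ∧ ξ < 1 - 2 * 0.454 + 4 * z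

theorem admissible_xi1 {z : ℝ} (hz₀ : -0.023 < z) (hz₁ : z < 0.046) : Admissible z (xi1 z) := by
  have ha : (0 : ℝ) < 2.382 := by norm_num
  rw [Admissible, xi1_eq_smallerRoot]
  refine ⟨hz₀, hz₁, smallerRoot_pos ha (by unfold bcoef; linarith) ?_,
    smallerRoot_lt ha ?_, smallerRoot_lt ha ?_⟩
  · rw [ccoef_eq]; nlinarith
  -- at these two points `u` resp. `v` vanishes, leaving `-1.618 ξ w < 0`
  · rw [quadratic_eq_four_mul_sub]; nlinarith
  · rw [quadratic_eq_four_mul_sub]; nlinarith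

noncomputable def xi1Deriv (z : ℝ) : ℝ :=
  (-0.09 - (609.8082 * z - 7.4479776) / (2 * √(Δcoef z))) / (2 * 2.382)

theorem hasDerivAt_xi1 (z : ℝ) : HasDerivAt xi1 (xi1Deriv z) z := by
  have hΔ : HasDerivAt Δcoef (609.8082 * z - 7.4479776) z := by
    rw [show Δcoef = fun z => 304.9041 * z ^ 2 - 7.4479776 * z + 5.5276264704 from funext Δcoef_eq]
    refine ((((hasDerivAt_pow 2 z).const_mul 304.9041).fun_sub
      ((hasDerivAt_id' z).const_mul 7.4479776)).add_const 5.5276264704).congr_deriv ?_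
    norm_num
    ring
  have hb : HasDerivAt bcoef 0.09 z :=
    ((((hasDerivAt_id' z).const_mul 0.09).const_add (-0.18 * 0.454)).sub_const 2.337).congr_deriv
      (mul_one _)
  have hsqrt := hΔ.sqrt (Δcoef_pos z).ne'
  exact (hb.neg.fun_sub hsqrt).div_const _

theorem le_xi1Deriv {z L : ℝ} (hL : 0 ≤ -0.09 - 4.764 * L)
    (h : 609.8082 * z - 7.4479776 ≤ 2 * 2.3413 * (-0.09 - 4.764 * L)) : L ≤ xi1Deriv z := by
  have hs := le_sqrt_Δcoef z
  have hdiv : (609.8082 * z - 7.4479776) / (2 * √(Δcoef z)) ≤ -0.09 - 4.764 * L := by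
    rw [div_le_iff₀ (by linarith)]; nlinarith
  unfold xi1Deriv
  rw [le_div_iff₀ (by norm_num)]; linarith

/- Requiring the hypothesis at both bounds `2.3413 ≤ √Δ ≤ 2.4146` covers either sign of
`-0.09 - 4.764 * U`. -/
theorem xi1Deriv_le {z U : ℝ} (hz₀ : 0 ≤ z) (hz₁ : z ≤ 0.046)
    (h₁ : 2 * 2.3413 * (-0.09 - 4.764 * U) ≤ 609.8082 * z - 7.4479776)
    (h₂ : 2 * 2.4146 * (-0.09 - 4.764 * U) ≤ 609.8082 * z - 7.4479776) : xi1Deriv z ≤ U := by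
  have hs₁ := le_sqrt_Δcoef z
  have hs₂ := sqrt_Δcoef_le hz₀ hz₁
  have hdiv : -0.09 - 4.764 * U ≤ (609.8082 * z - 7.4479776) / (2 * √(Δcoef z)) := by
    rw [le_div_iff₀ (by linarith)]
    nlinarith [mul_nonneg (sub_nonneg.2 hs₁) (sub_nonneg.2 h₂),
      mul_nonneg (sub_nonneg.2 hs₂) (sub_nonneg.2 h₁)]
  unfold xi1Deriv
  rw [div_le_iff₀ (by norm_num)]; linarith

noncomputable def logH (z ξ : ℝ) : ℝ :=
  ((1 / 2 - 4 * 0.454 + 2 * z) * log 3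
    + (1 - 2 * 0.454 - 2 * z) * log (1 - 2 * 0.454 - 2 * z)
    + (1 - 2 * 0.454 + 4 * z) * log (1 - 2 * 0.454 + 4 * z)
    + (6 * 0.454 - 3 / 2 + 3 * z) * log (6 * 0.454 - 3 / 2 + 3 * z)
    + (6 * 0.454 - 3 / 2 - 9 * z) * log (6 * 0.454 - 3 / 2 - 9 * z)
    - (2 * 0.454 + z - 1 / 2) * log (2 * 0.454 + z - 1 / 2)
    - (1 - 2 * 0.454 + z) * log 2
    - (1 / 2 - 0.454 - z) * log (1 / 2 - 0.454 - z)
    - (1 / 2 - 0.454 + 2 * z) * log (1 / 2 - 0.454 + 2 * z)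
    - (2 * 0.454 - 3 * z - 1 / 2) * log (2 * 0.454 - 3 * z - 1 / 2))
  + (2 * ξ * log 2 + ξ * log (1 / 1.618)
    - ξ * log ξ
    - (1 - 2 * 0.454 - 2 * z - ξ) * log (1 - 2 * 0.454 - 2 * z - ξ)
    - (1 - 2 * 0.454 + 4 * z - ξ) * log (1 - 2 * 0.454 + 4 * z - ξ)
    - (10 * 0.454 - 7 / 2 - 5 * z + ξ) * log (10 * 0.454 - 7 / 2 - 5 * z + ξ))

theorem log_hfun_eq {z ξ : ℝ} (h : Admissible z ξ) : log (hfun 0.454 z ξ) = logH z ξ := by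
  obtain ⟨hz₀, hz₁, hξ, hu, hv⟩ := h
  have h₁ : (0 : ℝ) < 1 - 2 * 0.454 - 2 * z := by linarith
  have h₂ : (0 : ℝ) < 1 - 2 * 0.454 + 4 * z := by linarith
  have h₃ : (0 : ℝ) < 6 * 0.454 - 3 / 2 + 3 * z := by linarith
  have h₄ : (0 : ℝ) < 6 * 0.454 - 3 / 2 - 9 * z := by linarith
  have h₅ : (0 : ℝ) < 2 * 0.454 + z - 1 / 2 := by linarith
  have h₆ : (0 : ℝ) < 1 / 2 - 0.454 - z := by linarith
  have h₇ : (0 : ℝ) < 1 / 2 - 0.454 + 2 * z := by linarith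
  have h₈ : (0 : ℝ) < 2 * 0.454 - 3 * z - 1 / 2 := by linarith
  have hu' : 0 < 1 - 2 * 0.454 - 2 * z - ξ := by linarith
  have hv' : 0 < 1 - 2 * 0.454 + 4 * z - ξ := by linarith
  have hw : (0 : ℝ) < 10 * 0.454 - 7 / 2 - 5 * z + ξ := by linarith
  simp only [hfun, ffun, gfun, rpow_def_of_pos, h₁, h₂, h₃, h₄, h₅, h₆, h₇, h₈, hξ, hu', hv', hw,
    three_pos, two_pos, show (0 : ℝ) < 1 / 1.618 by norm_num, ← exp_add, ← exp_sub, log_exp]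
  unfold logH
  ring

theorem HasDerivAt.mul_log {f : ℝ → ℝ} {f' x : ℝ} (hf : HasDerivAt f f' x) (hx : f x ≠ 0) :
    HasDerivAt (fun y => f y * Real.log (f y)) (f' * (Real.log (f x) + 1)) x :=
  ((hasDerivAt_mul_log hx).comp x hf).congr_deriv (mul_comm _ _)

noncomputable def partialZLogH (z ξ : ℝ) : ℝ :=
  2 * log 3 - log 2
    - 2 * log (1 - 2 * 0.454 - 2 * z) + 4 * log (1 - 2 * 0.454 + 4 * z)
    + 3 * log (6 * 0.454 - 3 / 2 + 3 * z) - 9 * log (6 * 0.454 - 3 / 2 - 9 * z)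
    - log (2 * 0.454 + z - 1 / 2) + log (1 / 2 - 0.454 - z)
    - 2 * log (1 / 2 - 0.454 + 2 * z) + 3 * log (2 * 0.454 - 3 * z - 1 / 2)
    + 2 * log (1 - 2 * 0.454 - 2 * z - ξ) - 4 * log (1 - 2 * 0.454 + 4 * z - ξ)
    + 5 * log (10 * 0.454 - 7 / 2 - 5 * z + ξ)

noncomputable def partialXiLogH (z ξ : ℝ) : ℝ :=
  2 * log 2 + log (1 / 1.618) - log ξ
    + log (1 - 2 * 0.454 - 2 * z - ξ) + log (1 - 2 * 0.454 + 4 * z - ξ)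
    - log (10 * 0.454 - 7 / 2 - 5 * z + ξ)

theorem hasDerivAt_logH_comp {ξ : ℝ → ℝ} {ξ' z : ℝ} (hξ : HasDerivAt ξ ξ' z)
    (h : Admissible z (ξ z)) :
    HasDerivAt (fun y => logH y (ξ y)) (partialZLogH z (ξ z) + ξ' * partialXiLogH z (ξ z)) z := by
  obtain ⟨hz₀, hz₁, hξ₀, hu, hv⟩ := h
  have hid := hasDerivAt_id' z
  have hA₁ := (hid.const_mul 2).const_sub (1 - 2 * 0.454)
  have hA₂ := (hid.const_mul 4).const_add (1 - 2 * 0.454)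
  have hA₃ := (hid.const_mul 3).const_add (6 * 0.454 - 3 / 2)
  have hA₄ := (hid.const_mul 9).const_sub (6 * 0.454 - 3 / 2)
  have hA₅ := (hid.const_add (2 * 0.454)).sub_const (1 / 2)
  have hA₆ := hid.const_sub (1 / 2 - 0.454)
  have hA₇ := (hid.const_mul 2).const_add (1 / 2 - 0.454)
  have hA₈ := ((hid.const_mul 3).const_sub (2 * 0.454)).sub_const (1 / 2)
  have hw := ((hid.const_mul 5).const_sub (10 * 0.454 - 7 / 2)).fun_add hξ
  have hF := (((((((((((hid.const_mul 2).const_add (1 / 2 - 4 * 0.454)).mul_const (log 3)).add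
    (hA₁.mul_log (ne_of_gt (by linarith)))).add
    (hA₂.mul_log (ne_of_gt (by linarith)))).add
    (hA₃.mul_log (ne_of_gt (by linarith)))).add
    (hA₄.mul_log (ne_of_gt (by linarith)))).sub
    (hA₅.mul_log (ne_of_gt (by linarith)))).sub
    ((hid.const_add (1 - 2 * 0.454)).mul_const (log 2))).sub
    (hA₆.mul_log (ne_of_gt (by linarith)))).sub
    (hA₇.mul_log (ne_of_gt (by linarith)))).sub
    (hA₈.mul_log (ne_of_gt (by linarith)))
  have hG := ((((((hξ.const_mul 2).mul_const (log 2)).add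
    (hξ.mul_const (log (1 / 1.618)))).sub
    (hξ.mul_log (ne_of_gt hξ₀))).sub
    ((hA₁.fun_sub hξ).mul_log (ne_of_gt (by linarith)))).sub
    ((hA₂.fun_sub hξ).mul_log (ne_of_gt (by linarith)))).sub
    (hw.mul_log (ne_of_gt (by linarith)))
  refine (hF.add hG).congr_deriv ?_
  unfold partialZLogH partialXiLogH
  ring

theorem partialXiLogH_xi1 {z : ℝ} (hz₀ : -0.023 < z) (hz₁ : z < 0.046) :
    partialXiLogH z (xi1 z) = 0 := by
  obtain ⟨-, -, hξ, hu, hv⟩ := admissible_xi1 hz₀ hz₁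
  have hu' : 0 < 1 - 2 * 0.454 - 2 * z - xi1 z := by linarith
  have hv' : 0 < 1 - 2 * 0.454 + 4 * z - xi1 z := by linarith
  have hw : 0 < 10 * 0.454 - 7 / 2 - 5 * z + xi1 z := by linarith
  have hcrit := quadratic_xi1_eq_zero z
  rw [quadratic_eq_four_mul_sub, sub_eq_zero] at hcrit
  have hlog := congrArg log hcrit
  rw [log_mul (mul_pos four_pos hu').ne' hv'.ne', log_mul four_ne_zero hu'.ne',
    log_mul (by positivity) hw.ne', log_mul (by norm_num) hξ.ne'] at hlog
  have h4 : log (4 : ℝ) = 2 * log 2 := by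
    rw [show (4 : ℝ) = 2 ^ 2 by norm_num, log_pow]; norm_num
  unfold partialXiLogH
  rw [one_div, log_inv]
  linarith

noncomputable def partialZLogHDeriv (z ξ ξ' : ℝ) : ℝ :=
  4 / (0.092 - 2 * z) + 16 / (0.092 + 4 * z) + 9 / (1.224 + 3 * z) + 81 / (1.224 - 9 * z)
    - 1 / (0.408 + z) - 1 / (0.046 - z) - 4 / (0.046 + 2 * z) - 9 / (0.408 - 3 * z)
    - 2 * (2 + ξ') / (0.092 - 2 * z - ξ) - 4 * (4 - ξ') / (0.092 + 4 * z - ξ)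
    - 5 * (5 - ξ') / (1.04 - 5 * z + ξ)

theorem hasDerivAt_partialZLogH_comp {ξ : ℝ → ℝ} {ξ' z : ℝ} (hξ : HasDerivAt ξ ξ' z)
    (h : Admissible z (ξ z)) :
    HasDerivAt (fun y => partialZLogH y (ξ y)) (partialZLogHDeriv z (ξ z) ξ') z := by
  obtain ⟨hz₀, hz₁, hξ₀, hu, hv⟩ := h
  have hid := hasDerivAt_id' z
  have hA₁ := (hid.const_mul 2).const_sub (1 - 2 * 0.454)
  have hA₂ := (hid.const_mul 4).const_add (1 - 2 * 0.454)
  have hA₃ := (hid.const_mul 3).const_add (6 * 0.454 - 3 / 2)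
  have hA₄ := (hid.const_mul 9).const_sub (6 * 0.454 - 3 / 2)
  have hA₅ := (hid.const_add (2 * 0.454)).sub_const (1 / 2)
  have hA₆ := hid.const_sub (1 / 2 - 0.454)
  have hA₇ := (hid.const_mul 2).const_add (1 / 2 - 0.454)
  have hA₈ := ((hid.const_mul 3).const_sub (2 * 0.454)).sub_const (1 / 2)
  have hw := ((hid.const_mul 5).const_sub (10 * 0.454 - 7 / 2)).fun_add hξ
  have H := (((((((((((hasDerivAt_const z (2 * log 3 - log 2)).sub
    ((hA₁.log (ne_of_gt (by linarith))).const_mul 2)).add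
    ((hA₂.log (ne_of_gt (by linarith))).const_mul 4)).add
    ((hA₃.log (ne_of_gt (by linarith))).const_mul 3)).sub
    ((hA₄.log (ne_of_gt (by linarith))).const_mul 9)).sub
    (hA₅.log (ne_of_gt (by linarith)))).add
    (hA₆.log (ne_of_gt (by linarith)))).sub
    ((hA₇.log (ne_of_gt (by linarith))).const_mul 2)).add
    ((hA₈.log (ne_of_gt (by linarith))).const_mul 3)).add
    (((hA₁.fun_sub hξ).log (ne_of_gt (by linarith))).const_mul 2)).sub
    (((hA₂.fun_sub hξ).log (ne_of_gt (by linarith))).const_mul 4)).add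
    ((hw.log (ne_of_gt (by linarith))).const_mul 5)
  refine H.congr_deriv ?_
  unfold partialZLogHDeriv
  ring

noncomputable def partialZLogHDerivBound (l r L U : ℝ) : ℝ :=
  9 / (1.224 + 3 * l) + 81 / (1.224 - 9 * r) - (1 + L) / (0.046 - l)
    - (8 - 4 * U) / (0.092 + 4 * r) - 1 / (0.408 + r) - 9 / (0.408 - 3 * l)
    - 5 * (5 - U) / (1.132 - 7 * l)

/- The terms singular at `z = 0.046` are paired: since `u < 2 (0.046 - z)`, together with the
`u`-term they contribute at most `-(1 + ξ') / (0.046 - z)`. -/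
theorem partialZLogHDeriv_le {z ξ ξ' l r L U : ℝ} (h : Admissible z ξ) (hl : 0 ≤ l) (hlz : l ≤ z)
    (hzr : z ≤ r) (hr : r ≤ 0.046) (hL : -1 ≤ L) (hLξ' : L ≤ ξ') (hUξ' : ξ' ≤ U) (hU : U ≤ 2) :
    partialZLogHDeriv z ξ ξ' ≤ partialZLogHDerivBound l r L U := by
  obtain ⟨-, hz₁, hξ, hu, hv⟩ := h
  have ha : 0 < 0.046 - z := by linarith
  have hu' : 0 < 0.092 - 2 * z - ξ := by linarith
  have hw : 0 < 1.04 - 5 * z + ξ := by linarith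
  have hA₁ : 4 / (0.092 - 2 * z) = 2 / (0.046 - z) := by
    rw [div_eq_div_iff (by linarith) ha.ne']; ring
  have hA₂ : 4 / (0.046 + 2 * z) = 8 / (0.092 + 4 * z) := by
    rw [div_eq_div_iff (by linarith) (by linarith)]; ring
  have hu₁ : (2 + ξ') / (0.046 - z) ≤ 2 * (2 + ξ') / (0.092 - 2 * z - ξ) := by
    rw [div_le_div_iff₀ ha hu']; nlinarith
  have hu₂ : (1 + L) / (0.046 - l) ≤ (1 + ξ') / (0.046 - z) := by gcongr; linarith
  have hv₁ : 4 * (4 - U) / (0.092 + 4 * z) ≤ 4 * (4 - ξ') / (0.092 + 4 * z - ξ) := by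
    gcongr <;> linarith
  have hv₂ : (8 - 4 * U) / (0.092 + 4 * r) ≤ (8 - 4 * U) / (0.092 + 4 * z) := by
    gcongr <;> linarith
  have h₃ : 9 / (1.224 + 3 * z) ≤ 9 / (1.224 + 3 * l) := by gcongr
  have h₄ : 81 / (1.224 - 9 * z) ≤ 81 / (1.224 - 9 * r) := by gcongr; linarith
  have h₅ : 1 / (0.408 + r) ≤ 1 / (0.408 + z) := by gcongr; linarith
  have h₆ : 9 / (0.408 - 3 * l) ≤ 9 / (0.408 - 3 * z) := by gcongr; linarith
  have hw₁ : 5 * (5 - U) / (1.132 - 7 * l) ≤ 5 * (5 - ξ') / (1.04 - 5 * z + ξ) := by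
    gcongr <;> linarith
  have e₁ : 2 / (0.046 - z) - 1 / (0.046 - z) - (2 + ξ') / (0.046 - z)
      = -((1 + ξ') / (0.046 - z)) := by ring
  have e₂ : 16 / (0.092 + 4 * z) - 8 / (0.092 + 4 * z) - 4 * (4 - U) / (0.092 + 4 * z)
      = -((8 - 4 * U) / (0.092 + 4 * z)) := by ring
  unfold partialZLogHDeriv partialZLogHDerivBound
  rw [hA₁, hA₂]
  linarith

theorem partialZLogHDeriv_xi1_le {z l r L U : ℝ} (hl : 0 ≤ l) (hlz : l ≤ z) (hzr : z ≤ r)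
    (hz : z < 0.046) (hr : r ≤ 0.046) (hL : -1 ≤ L) (hL₀ : 0 ≤ -0.09 - 4.764 * L)
    (hLr : 609.8082 * r - 7.4479776 ≤ 2 * 2.3413 * (-0.09 - 4.764 * L)) (hU : U ≤ 2)
    (hUl₁ : 2 * 2.3413 * (-0.09 - 4.764 * U) ≤ 609.8082 * l - 7.4479776)
    (hUl₂ : 2 * 2.4146 * (-0.09 - 4.764 * U) ≤ 609.8082 * l - 7.4479776) :
    partialZLogHDeriv z (xi1 z) (xi1Deriv z) ≤ partialZLogHDerivBound l r L U :=
  partialZLogHDeriv_le (admissible_xi1 (by linarith) hz) hl hlz hzr hr hL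
    (le_xi1Deriv hL₀ (by linarith)) (xi1Deriv_le (by linarith) (by linarith) (by linarith)
      (by linarith)) hU

theorem partialZLogHDeriv_xi1_lt {z : ℝ} (hz₀ : 0 ≤ z) (hz₁ : z < 0.046) :
    partialZLogHDeriv z (xi1 z) (xi1Deriv z) < -2.46 := by
  rcases le_or_gt z 0.024 with h₁ | h₁
  · refine (partialZLogHDeriv_xi1_le (r := 0.024) (L := -0.35) (U := 0.32) le_rfl hz₀ h₁ hz₁
      ?_ ?_ ?_ ?_ ?_ ?_ ?_).trans_lt ?_ <;> norm_num [partialZLogHDerivBound]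
  rcases le_or_gt z 0.039 with h₂ | h₂
  · refine (partialZLogHDeriv_xi1_le (L := -0.76) (U := -0.33) (by norm_num) h₁.le h₂ hz₁
      ?_ ?_ ?_ ?_ ?_ ?_ ?_).trans_lt ?_ <;> norm_num [partialZLogHDerivBound]
  · refine (partialZLogHDeriv_xi1_le (r := 0.046) (L := -0.95) (U := -0.72) (by norm_num) h₂.le
      hz₁.le hz₁ ?_ ?_ ?_ ?_ ?_ ?_ ?_).trans_lt ?_ <;> norm_num [partialZLogHDerivBound]

theorem hasDerivAt_log_hfun_xi1 {z : ℝ} (hz₀ : -0.023 < z) (hz₁ : z < 0.046) :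
    HasDerivAt (fun y => log (hfun 0.454 y (xi1 y))) (partialZLogH z (xi1 z)) z := by
  have h := hasDerivAt_logH_comp (hasDerivAt_xi1 z) (admissible_xi1 hz₀ hz₁)
  rw [partialXiLogH_xi1 hz₀ hz₁, mul_zero, add_zero] at h
  refine h.congr_of_eventuallyEq ?_
  filter_upwards [Ioo_mem_nhds hz₀ hz₁] with y hy
  exact log_hfun_eq (admissible_xi1 hy.1 hy.2)

theorem deriv_deriv_log_hfun_xi1 {z : ℝ} (hz₀ : -0.023 < z) (hz₁ : z < 0.046) :
    deriv (deriv fun y => log (hfun 0.454 y (xi1 y))) z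
      = partialZLogHDeriv z (xi1 z) (xi1Deriv z) := by
  have h : deriv (fun y => log (hfun 0.454 y (xi1 y))) =ᶠ[𝓝 z]
      fun y => partialZLogH y (xi1 y) := by
    filter_upwards [Ioo_mem_nhds hz₀ hz₁] with y hy
    exact (hasDerivAt_log_hfun_xi1 hy.1 hy.2).deriv
  rw [h.deriv_eq]
  exact (hasDerivAt_partialZLogH_comp (hasDerivAt_xi1 z) (admissible_xi1 hz₀ hz₁)).deriv

/-- the second derivative of `ζ ↦ ln h(0.454, ζ, ξ₁(ζ))` is less than `−2.46`
on `[0, 0.046)`; in particular this function is strictly concave there. -/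
theorem log_h_along_xi1_second_deriv_lt :
    (∀ ζ : ℝ, 0 ≤ ζ → ζ < 0.046 →
        deriv (deriv fun z : ℝ => Real.log (hfun 0.454 z (xi1 z))) ζ < -2.46) ∧
      StrictConcaveOn ℝ (Set.Ico (0 : ℝ) 0.046)
        (fun z : ℝ => Real.log (hfun 0.454 z (xi1 z))) := by
  have hlt : ∀ ζ : ℝ, 0 ≤ ζ → ζ < 0.046 →
      deriv (deriv fun z : ℝ => Real.log (hfun 0.454 z (xi1 z))) ζ < -2.46 := fun ζ h₀ h₁ =>
    (deriv_deriv_log_hfun_xi1 (by linarith) h₁).trans_lt (partialZLogHDeriv_xi1_lt h₀ h₁)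
  refine ⟨hlt, strictConcaveOn_of_deriv2_neg' (convex_Ico 0 0.046) ?_ fun ζ hζ => ?_⟩
  · exact fun ζ hζ =>
      (hasDerivAt_log_hfun_xi1 (by linarith [hζ.1]) hζ.2).continuousAt.continuousWithinAt
  · rw [Function.iterate_succ_apply', Function.iterate_one]
    linarith [hlt ζ hζ.1 hζ.2]
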